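/- (Generalized Reflection Principle for systems with perfect recall.) Let ℛ be a (synchronous or asynchronous) system in which the agent has perfect recall, let Pr be a probability measure on ℛ with Pr({r'}) > 0 for every run r', let (r,0) be a point and m a time, and let K(r₁,m), …, K(r_k,m) be the distinct information sets of the form K(r',m) for r' ∈ ℛ(K(r,0)). Then for every set of runs S ⊆ ℛ, the agent's current conditional probability lies in the span of her possible future conditional probabilities: min_{1≤j≤k} Pr(S | ℛ(K(r_j,m))) ≤ Pr(S | ℛ(K(r,0))) ≤ max_{1≤j≤k} Pr(S | ℛ(K(r_j,m))). -/

import Mathlib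

/-
Under perfect recall, indistinguishable points carry the same local-state sequence, and along a
run these sequences only grow by extension. Hence two sets of runs `ℛ(K(r₁,m₁))`, `ℛ(K(r₂,m₂))`
sharing a run are nested: they form a laminar family. The maximal members among the
`ℛ(K(rⱼ,m))` therefore partition `ℛ(K(r,0))`, and `Pr(S | ℛ(K(r,0)))` is the average of the
`Pr(S | ·)` over these blocks weighted by their probabilities, hence lies between the smallest
and the largest of them.
-/

open scoped Classical

namespace SBP

variable {L : Type*}

/-- A point: a run together with a time. -/
abbrev Point (L : Type*) := (ℕ → L) × ℕ

/-- The information set `K(r,m)`: all points `(r',m')` with `r' ∈ ℛ` and `r' m' = r m`. -/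
def K (ℛ : Finset (ℕ → L)) (r : ℕ → L) (m : ℕ) : Set (Point L) :=
  {p | p.1 ∈ ℛ ∧ p.1 p.2 = r m}

/-- `ℛ(U)`: the runs of `ℛ` passing through some point of `U`. -/
noncomputable def runsOf (ℛ : Finset (ℕ → L)) (U : Set (Point L)) : Finset (ℕ → L) :=
  ℛ.filter fun r' => ∃ m', (r', m') ∈ U

/-- A system is synchronous if indistinguishable points occur at the same time. -/
def Synchronous (ℛ : Finset (ℕ → L)) : Prop :=
  ∀ r ∈ ℛ, ∀ r' ∈ ℛ, ∀ m m' : ℕ, r m = r' m' → m = m'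

/-- The local-state sequence of run `r` at time `m`:
`r 0, r 1, …, r m` with consecutive repetitions removed. -/
noncomputable def lseq (r : ℕ → L) (m : ℕ) : List L :=
  ((List.range (m + 1)).map r).destutter (· ≠ ·)

/-- Perfect recall: indistinguishable points have the same local-state sequence. -/
def PerfectRecall (ℛ : Finset (ℕ → L)) : Prop :=
  ∀ r ∈ ℛ, ∀ r' ∈ ℛ, ∀ m m' : ℕ, r m = r' m' → lseq r m = lseq r' m'

/-- A run-based event: contains all points of a run or none of them. -/
def RunBased (U : Set (Point L)) : Prop :=
  ∀ (r' : ℕ → L) (k k' : ℕ), (r', k) ∈ U → (r', k') ∈ U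

/-- The probability of a (finite) set of runs. -/
noncomputable def PrS (pr : (ℕ → L) → ℝ) (S : Finset (ℕ → L)) : ℝ := ∑ r ∈ S, pr r

/-- `n_{(r,m)}(r')`: the number of points of the information set `K(r,m)` lying on run `r'`. -/
noncomputable def npts (r : ℕ → L) (m : ℕ) (r' : ℕ → L) : ℕ :=
  Nat.card {k : ℕ | r' k = r m}

/-- The Elga probability of a single point, for the agent at the point `(r,m)`. -/
noncomputable def elga (ℛ : Finset (ℕ → L)) (pr : (ℕ → L) → ℝ) (r : ℕ → L) (m : ℕ)
    (p : Point L) : ℝ :=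
  if p ∈ K ℛ r m then
    pr p.1 / ∑ r'' ∈ runsOf ℛ (K ℛ r m), pr r'' * (npts r m r'' : ℝ)
  else 0

/-- Conditional probability of a set of runs `S` given a set of runs `T`. -/
noncomputable def condP (pr : (ℕ → L) → ℝ) (S T : Finset (ℕ → L)) : ℝ :=
  PrS pr (S ∩ T) / PrS pr T

open Finset

section List

variable {α : Type*}

theorem _root_.List.exists_destutter'_eq_cons (R : α → α → Prop) [DecidableRel R] :
    ∀ (l : List α) (a : α), ∃ t, l.destutter' R a = a :: t
  | [], a => ⟨[], List.destutter'_nil R⟩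
  | b :: l, a => by
    rw [List.destutter'_cons]
    split
    · exact ⟨_, rfl⟩
    · exact List.exists_destutter'_eq_cons R l a

theorem _root_.List.IsPrefix.destutter' {R : α → α → Prop} [DecidableRel R]
    {l₁ l₂ : List α} (h : l₁ <+: l₂) (a : α) : l₁.destutter' R a <+: l₂.destutter' R a := by
  obtain ⟨t, rfl⟩ := h
  induction l₁ generalizing a with
  | nil =>
    obtain ⟨u, hu⟩ := List.exists_destutter'_eq_cons R t a
    rw [List.destutter'_nil, List.nil_append, hu]
    exact ⟨u, rfl⟩
  | cons b l ih =>
    rw [List.cons_append, List.destutter'_cons, List.destutter'_cons]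
    split
    · exact List.cons_prefix_cons.2 ⟨rfl, ih b⟩
    · exact ih a

theorem _root_.List.IsPrefix.destutter {R : α → α → Prop} [DecidableRel R]
    {l₁ l₂ : List α} (h : l₁ <+: l₂) : l₁.destutter R <+: l₂.destutter R := by
  obtain ⟨t, rfl⟩ := h
  cases l₁ with
  | nil => exact List.nil_prefix
  | cons a l => simpa only [List.cons_append, List.destutter_cons'] using
      (List.prefix_append l t).destutter' a

theorem _root_.List.mem_destutter'_ne {b : α} :
    ∀ {l : List α} {a : α}, b ∈ a :: l → b ∈ l.destutter' (· ≠ ·) a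
  | [], a, h => by simpa using h
  | c :: l, a, h => by
    rw [List.destutter'_cons]
    split
    · rcases List.mem_cons.1 h with rfl | h
      · exact List.mem_cons_self
      · exact List.mem_cons_of_mem _ (List.mem_destutter'_ne h)
    · next hac =>
      rw [not_not] at hac
      subst hac
      exact List.mem_destutter'_ne (by simpa using h)

theorem _root_.List.mem_destutter_ne {b : α} {l : List α} :
    b ∈ l.destutter (· ≠ ·) ↔ b ∈ l := by
  refine ⟨fun h => (List.destutter_sublist _ l).subset h, fun h => ?_⟩
  cases l with
  | nil => simp at h
  | cons a l =>
    rw [List.destutter_cons']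
    exact List.mem_destutter'_ne h

end List

theorem lseq_eq_cons (r : ℕ → L) (m : ℕ) : ∃ t, lseq r m = r 0 :: t := by
  rw [lseq, List.range_succ_eq_map, List.map_cons, List.destutter_cons']
  exact List.exists_destutter'_eq_cons _ _ _

theorem lseq_prefix_of_le (r : ℕ → L) {m m' : ℕ} (h : m ≤ m') : lseq r m <+: lseq r m' :=
  have hrange : List.range (m + 1) <+: List.range (m' + 1) := by
    simpa [Nat.min_eq_left (Nat.succ_le_succ h)] using List.take_prefix (m + 1) (List.range (m' + 1))
  (hrange.map r).destutter

theorem mem_lseq {r : ℕ → L} {m : ℕ} {x : L} : x ∈ lseq r m ↔ ∃ t ≤ m, r t = x := by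
  simp [lseq, List.mem_destutter_ne]

theorem mem_runsOf_K {ℛ : Finset (ℕ → L)} {r' ρ : ℕ → L} {n : ℕ} :
    r' ∈ runsOf ℛ (K ℛ ρ n) ↔ r' ∈ ℛ ∧ ∃ t, r' t = ρ n := by
  simp [runsOf, K]

section Laminar

variable {α : Type*}

def IsLaminar (F : Set (Finset α)) : Prop :=
  ∀ A ∈ F, ∀ B ∈ F, ¬Disjoint A B → A ⊆ B ∨ B ⊆ A

theorem IsLaminar.mono {F G : Set (Finset α)} (hG : IsLaminar G) (h : F ⊆ G) :
    IsLaminar F :=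
  fun A hA B hB => hG A (h hA) B (h hB)

theorem IsLaminar.exists_pairwiseDisjoint_biUnion_eq {F : Finset (Finset α)}
    (hF : IsLaminar (F : Set (Finset α))) :
    ∃ P ⊆ F, (P : Set (Finset α)).PairwiseDisjoint id ∧ P.biUnion id = F.biUnion id := by
  refine ⟨F.filter (Maximal (· ∈ F)), filter_subset _ _, ?_, ?_⟩
  · intro A hA B hB hAB
    simp only [coe_filter, Set.mem_ofPred_eq] at hA hB
    by_contra hdisj
    rcases hF A hA.1 B hB.1 hdisj with h | h
    · exact hAB (hA.2.eq_of_le hB.1 h)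
    · exact hAB (hB.2.eq_of_le hA.1 h).symm
  · refine (biUnion_subset_biUnion_of_subset_left _ (filter_subset _ _)).antisymm ?_
    simp only [biUnion_subset, id]
    intro A hA x hx
    obtain ⟨B, hAB, hB⟩ := F.exists_le_maximal hA
    exact mem_biUnion.2 ⟨B, mem_filter.2 ⟨hB.1, hB⟩, hAB hx⟩

end Laminar

namespace PerfectRecall

variable {ℛ : Finset (ℕ → L)} (hrec : PerfectRecall ℛ)
include hrec

theorem apply_zero_eq {x y : ℕ → L} (hx : x ∈ ℛ) (hy : y ∈ ℛ) {s t : ℕ} (h : x s = y t) :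
    x 0 = y 0 := by
  obtain ⟨u, hu⟩ := lseq_eq_cons x s
  obtain ⟨v, hv⟩ := lseq_eq_cons y t
  have := hrec x hx y hy s t h
  rw [hu, hv] at this
  exact List.head_eq_of_cons_eq this

theorem runsOf_K_subset {r₁ r₂ : ℕ → L} (h₂ : r₂ ∈ ℛ) {m₁ m₂ : ℕ}
    (hpre : lseq r₁ m₁ <+: lseq r₂ m₂) :
    runsOf ℛ (K ℛ r₂ m₂) ⊆ runsOf ℛ (K ℛ r₁ m₁) := by
  intro x hx
  obtain ⟨hxℛ, s, hs⟩ := mem_runsOf_K.1 hx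
  have hmem : r₁ m₁ ∈ lseq x s :=
    hrec x hxℛ r₂ h₂ s m₂ hs ▸ hpre.subset (mem_lseq.2 ⟨m₁, le_rfl, rfl⟩)
  obtain ⟨t, -, ht⟩ := mem_lseq.1 hmem
  exact mem_runsOf_K.2 ⟨hxℛ, t, ht⟩

theorem isLaminar :
    IsLaminar {T | ∃ ρ ∈ ℛ, ∃ n, T = runsOf ℛ (K ℛ ρ n)} := by
  rintro _ ⟨ρ₁, h₁, n₁, rfl⟩ _ ⟨ρ₂, h₂, n₂, rfl⟩ hnd
  obtain ⟨x, hx₁, hx₂⟩ := not_disjoint_iff.1 hnd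
  obtain ⟨hxℛ, t₁, ht₁⟩ := mem_runsOf_K.1 hx₁
  obtain ⟨-, t₂, ht₂⟩ := mem_runsOf_K.1 hx₂
  have p₁ : lseq ρ₁ n₁ <+: lseq x (max t₁ t₂) :=
    hrec x hxℛ ρ₁ h₁ t₁ n₁ ht₁ ▸ lseq_prefix_of_le x (le_max_left t₁ t₂)
  have p₂ : lseq ρ₂ n₂ <+: lseq x (max t₁ t₂) :=
    hrec x hxℛ ρ₂ h₂ t₂ n₂ ht₂ ▸ lseq_prefix_of_le x (le_max_right t₁ t₂)
  rcases List.prefix_or_prefix_of_prefix p₁ p₂ with h | h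
  · exact Or.inr (runsOf_K_subset hrec h₂ h)
  · exact Or.inl (runsOf_K_subset hrec h₁ h)

theorem runsOf_K_subset_runsOf_K_zero {r ρ : ℕ → L} (hr : r ∈ ℛ)
    (hρ : ρ ∈ runsOf ℛ (K ℛ r 0)) (m : ℕ) :
    runsOf ℛ (K ℛ ρ m) ⊆ runsOf ℛ (K ℛ r 0) := by
  obtain ⟨hρℛ, u, hu⟩ := mem_runsOf_K.1 hρ
  intro x hx
  obtain ⟨hxℛ, s, hs⟩ := mem_runsOf_K.1 hx
  exact mem_runsOf_K.2 ⟨hxℛ, 0,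
    (hrec.apply_zero_eq hxℛ hρℛ hs).trans (hrec.apply_zero_eq hρℛ hr hu)⟩

end PerfectRecall

theorem condP_biUnion_eq_centerMass (pr : (ℕ → L) → ℝ) (S : Finset (ℕ → L))
    {P : Finset (Finset (ℕ → L))} (hP : (P : Set (Finset (ℕ → L))).PairwiseDisjoint id)
    (hpos : ∀ A ∈ P, PrS pr A ≠ 0) :
    condP pr S (P.biUnion id) = P.centerMass (PrS pr) (condP pr S) := by
  have hSP : (P : Set (Finset (ℕ → L))).PairwiseDisjoint fun A => S ∩ id A :=
    hP.mono fun _ => inter_subset_right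
  have hblock : ∀ A ∈ P, PrS pr A • condP pr S A = PrS pr (S ∩ A) := fun A hA =>
    mul_div_cancel₀ _ (hpos A hA)
  rw [condP, centerMass, sum_congr rfl hblock, inter_biUnion, PrS, PrS, sum_biUnion hP,
    sum_biUnion hSP, smul_eq_mul, inv_mul_eq_div]
  rfl

theorem iInf_condP_le_condP_and_condP_le_iSup {ι : Type*} [Fintype ι] (pr : (ℕ → L) → ℝ)
    (S T : Finset (ℕ → L)) (U : ι → Finset (ℕ → L)) (hlam : IsLaminar (Set.range U))
    (hcover : univ.biUnion U = T) (hpos : ∀ i, 0 < PrS pr (U i)) (hT : T.Nonempty) :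
    (⨅ i, condP pr S (U i)) ≤ condP pr S T ∧ condP pr S T ≤ ⨆ i, condP pr S (U i) := by
  obtain ⟨P, hPU, hdisj, hPT⟩ := IsLaminar.exists_pairwiseDisjoint_biUnion_eq
    (hlam.mono (by simp) : IsLaminar ((univ.image U : Finset _) : Set _))
  rw [image_biUnion] at hPT
  replace hPT : P.biUnion id = T := hPT.trans hcover
  have hblock : ∀ A ∈ P, ∃ i, U i = A := fun A hA => by simpa using hPU hA
  have hPpos : ∀ A ∈ P, 0 < PrS pr A := fun A hA => by
    obtain ⟨i, rfl⟩ := hblock A hA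
    exact hpos i
  obtain ⟨A₀, hA₀, -⟩ := biUnion_nonempty.1 (hPT ▸ hT)
  have hw : 0 < ∑ A ∈ P, PrS pr A := sum_pos hPpos ⟨A₀, hA₀⟩
  rw [← hPT, condP_biUnion_eq_centerMass pr S hdisj fun A hA => (hPpos A hA).ne']
  constructor
  · refine le_trans (le_inf' _ _ fun A hA => ?_)
      (inf_le_centerMass (fun A hA => (hPpos A hA).le) hw)
    obtain ⟨i, rfl⟩ := hblock A hA
    exact ciInf_le (Finite.bddBelow_range _) i
  · refine le_trans (centerMass_le_sup (fun A hA => (hPpos A hA).le) hw)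
      (sup'_le _ _ fun A hA => ?_)
    obtain ⟨i, rfl⟩ := hblock A hA
    exact le_ciSup (Finite.bddAbove_range (fun i => condP pr S (U i))) i

theorem generalized_reflection_general (ℛ : Finset (ℕ → L))
    (hrec : PerfectRecall ℛ)
    (pr : (ℕ → L) → ℝ) (hpos : ∀ r' ∈ ℛ, 0 < pr r')
    (r : ℕ → L) (hr : r ∈ ℛ) (m : ℕ)
    (k : ℕ) (rs : Fin k → ℕ → L)
    (hmem : ∀ j : Fin k, rs j ∈ runsOf ℛ (K ℛ r 0))
    (hall : ∀ r' ∈ runsOf ℛ (K ℛ r 0), ∃ j : Fin k, K ℛ r' m = K ℛ (rs j) m) :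
    ∀ S : Finset (ℕ → L), S ⊆ ℛ →
      (⨅ j : Fin k, condP pr S (runsOf ℛ (K ℛ (rs j) m))) ≤
          condP pr S (runsOf ℛ (K ℛ r 0)) ∧
      condP pr S (runsOf ℛ (K ℛ r 0)) ≤
          ⨆ j : Fin k, condP pr S (runsOf ℛ (K ℛ (rs j) m)) := by
  intro S _
  have hrsℛ : ∀ j, rs j ∈ ℛ := fun j => (mem_runsOf_K.1 (hmem j)).1
  have hcover : univ.biUnion (fun j => runsOf ℛ (K ℛ (rs j) m)) = runsOf ℛ (K ℛ r 0) := by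
    refine (biUnion_subset.2 fun j _ =>
      hrec.runsOf_K_subset_runsOf_K_zero hr (hmem j) m).antisymm fun x hx => ?_
    obtain ⟨j, hj⟩ := hall x hx
    have hxK : (x, m) ∈ K ℛ (rs j) m := hj ▸ ⟨(mem_runsOf_K.1 hx).1, rfl⟩
    exact mem_biUnion.2 ⟨j, mem_univ j, mem_runsOf_K.2 ⟨hxK.1, m, hxK.2⟩⟩
  refine iInf_condP_le_condP_and_condP_le_iSup pr S _ _
    (hrec.isLaminar.mono ?_) hcover (fun j => ?_) ⟨r, mem_runsOf_K.2 ⟨hr, 0, rfl⟩⟩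
  · rintro _ ⟨j, rfl⟩
    exact ⟨rs j, hrsℛ j, m, rfl⟩
  · exact sum_pos (fun x hx => hpos x (filter_subset _ _ hx))
      ⟨rs j, mem_runsOf_K.2 ⟨hrsℛ j, m, rfl⟩⟩

/-- Generalized Reflection Principle for systems with perfect recall: the current
conditional probability lies in the span of the possible later conditional probabilities. -/
theorem generalized_reflection (ℛ : Finset (ℕ → L)) (hne : ℛ.Nonempty)
    (hrec : PerfectRecall ℛ)
    (pr : (ℕ → L) → ℝ) (hpos : ∀ r' ∈ ℛ, 0 < pr r') (hsum : ∑ r' ∈ ℛ, pr r' = 1)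
    (r : ℕ → L) (hr : r ∈ ℛ) (m : ℕ)
    (k : ℕ) (rs : Fin k → ℕ → L)
    (hmem : ∀ j : Fin k, rs j ∈ runsOf ℛ (K ℛ r 0))
    (hdist : Function.Injective fun j : Fin k => K ℛ (rs j) m)
    (hall : ∀ r' ∈ runsOf ℛ (K ℛ r 0), ∃ j : Fin k, K ℛ r' m = K ℛ (rs j) m) :
    ∀ S : Finset (ℕ → L), S ⊆ ℛ →
      (⨅ j : Fin k, condP pr S (runsOf ℛ (K ℛ (rs j) m))) ≤
          condP pr S (runsOf ℛ (K ℛ r 0)) ∧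
      condP pr S (runsOf ℛ (K ℛ r 0)) ≤
          ⨆ j : Fin k, condP pr S (runsOf ℛ (K ℛ (rs j) m)) :=
  generalized_reflection_general ℛ hrec pr hpos r hr m k rs hmem hall

end SBP
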